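/- For every x > 0, −log(1 − e^{−ax}) ≤ ∫_x^∞ (e^{−t}/t) dt ≤ −log(1 − e^{−x}), where a = e^{0.5772...} = e^γ with γ the Euler–Mascheroni constant. -/

import Mathlib

open MeasureTheory Real

open Set Filter Topology Asymptotics

/-!
Compare `E₁ y` with `-log (1 - e^{-b y})` through the gap `g_b(y) = E₁ y + log (1 - e^{-b y})`,
which tends to `0` as `y → ∞`. Its derivative `b / (e^{b y} - 1) - e^{-y} / y` is `≥ 0` exactly
when `e^{b y} - 1 ≤ b y e^y`.

For `b = 1` this always holds, so `g_1` increases to `0` and is `≤ 0`: the upper bound.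

For `b = e^γ`, integration by parts and `Γ'(1) = -γ` give `E₁ y + log y → -γ` as `y → 0⁺`, so `g_b`
tends to `0` at both ends. The function `b y e^y - (e^{b y} - 1)` vanishes at `0` and its derivative
has the sign of the concave function `log (1 + y) + y - b y`, which also vanishes at `0`; hence both
are `≥ 0` on an initial interval and `< 0` after it. So `g_b` first increases from `0`, then
decreases to `0`, and is `≥ 0`: the lower bound.
-/

local notation "γ" => eulerMascheroniConstant

lemma MonotoneOn.nonneg_of_tendsto_nhdsGT {a x : ℝ} {f : ℝ → ℝ} (hf : MonotoneOn f (Ioc a x))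
    (h0 : Tendsto f (𝓝[>] a) (𝓝 0)) (hx : a < x) : 0 ≤ f x :=
  le_of_tendsto h0 <| by
    filter_upwards [Ioo_mem_nhdsGT hx] with y hy using hf ⟨hy.1, hy.2.le⟩ ⟨hx, le_rfl⟩ hy.2.le

/-- `f` changes sign at most once on `(a, ∞)`, and if it does, from `≥ 0` to `< 0`. -/
def SingleCrossingOn (a : ℝ) (f : ℝ → ℝ) : Prop :=
  ∀ ⦃y z⦄, a < y → y ≤ z → 0 ≤ f z → 0 ≤ f y

namespace SingleCrossingOn

variable {a x : ℝ} {f f' g : ℝ → ℝ}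

lemma of_antitoneOn (hf : AntitoneOn f (Ioi a)) : SingleCrossingOn a f :=
  fun _ _ hy hyz hz => hz.trans (hf hy (hy.trans_le hyz) hyz)

lemma congr_nonneg (hf : SingleCrossingOn a f) (hfg : ∀ y, a < y → (0 ≤ f y ↔ 0 ≤ g y)) :
    SingleCrossingOn a g :=
  fun y z hy hyz hz => (hfg y hy).1 (hf hy hyz ((hfg z (hy.trans_le hyz)).2 hz))

lemma monotoneOn_or_antitoneOn (hf' : SingleCrossingOn a f')
    (hf : ∀ y, a < y → HasDerivAt f (f' y) y) (hx : a < x) :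
    MonotoneOn f (Ioc a x) ∨ AntitoneOn f (Ici x) := by
  by_cases hfx : 0 ≤ f' x
  · refine .inl (monotoneOn_of_hasDerivWithinAt_nonneg (f' := f') (convex_Ioc a x)
      (fun y hy => (hf y hy.1).continuousAt.continuousWithinAt) (fun y hy => ?_) (fun y hy => ?_))
    all_goals rw [interior_Ioc] at hy
    · exact (hf y hy.1).hasDerivWithinAt
    · exact hf' hy.1 hy.2.le hfx
  · refine .inr (antitoneOn_of_hasDerivWithinAt_nonpos (f' := f') (convex_Ici x)
      (fun y hy => (hf y (hx.trans_le hy)).continuousAt.continuousWithinAt)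
      (fun y hy => ?_) (fun y hy => ?_))
    all_goals rw [interior_Ici] at hy
    · exact (hf y (hx.trans hy)).hasDerivWithinAt
    · exact le_of_not_ge fun hy' => hfx (hf' hx hy.le hy')

lemma of_deriv (hf' : SingleCrossingOn a f') (hf : ∀ y, a < y → HasDerivAt f (f' y) y)
    (h0 : Tendsto f (𝓝[>] a) (𝓝 0)) : SingleCrossingOn a f := by
  intro y z hy hyz hz
  rcases hf'.monotoneOn_or_antitoneOn hf hy with hmono | hanti
  · exact hmono.nonneg_of_tendsto_nhdsGT h0 hy
  · exact hz.trans (hanti self_mem_Ici hyz hyz)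

lemma nonneg_of_deriv (hf' : SingleCrossingOn a f') (hf : ∀ y, a < y → HasDerivAt f (f' y) y)
    (h0 : Tendsto f (𝓝[>] a) (𝓝 0)) (htop : Tendsto f atTop (𝓝 0)) (hx : a < x) : 0 ≤ f x := by
  rcases hf'.monotoneOn_or_antitoneOn hf hx with hmono | hanti
  · exact hmono.nonneg_of_tendsto_nhdsGT h0 hx
  · exact le_of_tendsto htop <| by
      filter_upwards [eventually_ge_atTop x] with y hy using hanti self_mem_Ici hy hy

end SingleCrossingOn

lemma singleCrossingOn_log_one_add_add_sub_mul (b : ℝ) :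
    SingleCrossingOn 0 (fun y => log (1 + y) + y - b * y) := by
  have hderiv : ∀ y : ℝ, 0 < y →
      HasDerivAt (fun y => log (1 + y) + y - b * y) ((1 + y)⁻¹ + 1 - b) y := fun y hy => by
    have h := (((hasDerivAt_id y).const_add 1).log (by positivity)).add (hasDerivAt_id y)
    exact (h.sub ((hasDerivAt_id y).const_mul b)).congr_deriv (by simp)
  refine SingleCrossingOn.of_deriv (.of_antitoneOn fun y hy z hz hyz => ?_) hderiv ?_
  · have : (1 + z)⁻¹ ≤ (1 + y)⁻¹ := by gcongr; exact add_pos one_pos hy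
    linarith
  · have hcont : ContinuousAt (fun y : ℝ => log (1 + y) + y - b * y) 0 := by
      fun_prop (disch := norm_num)
    simpa using hcont.tendsto.mono_left nhdsWithin_le_nhds

lemma singleCrossingOn_mul_mul_exp_sub_exp_mul {b : ℝ} (hb : 0 < b) :
    SingleCrossingOn 0 (fun y => b * y * exp y - (exp (b * y) - 1)) := by
  have hderiv : ∀ y : ℝ, 0 < y → HasDerivAt (fun y => b * y * exp y - (exp (b * y) - 1))
      (b * ((1 + y) * exp y - exp (b * y))) y := fun y _ => by
    have h := (((hasDerivAt_id y).const_mul b).mul (hasDerivAt_exp y)).sub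
      (((hasDerivAt_id y).const_mul b).exp.sub_const 1)
    exact h.congr_deriv (by simp only [id]; ring)
  have hsign : ∀ y : ℝ, 0 < y →
      (0 ≤ log (1 + y) + y - b * y ↔ 0 ≤ b * ((1 + y) * exp y - exp (b * y))) := fun y hy => by
    rw [mul_nonneg_iff_of_pos_left hb, sub_nonneg, sub_nonneg,
      ← exp_log (by positivity : 0 < 1 + y), ← exp_add, exp_le_exp, log_exp]
  refine ((singleCrossingOn_log_one_add_add_sub_mul b).congr_nonneg hsign).of_deriv hderiv ?_
  have hcont : Continuous fun y => b * y * exp y - (exp (b * y) - 1) := by fun_prop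
  simpa using (hcont.tendsto 0).mono_left nhdsWithin_le_nhds

section SetIntegralIoi

variable {E : Type*} [NormedAddCommGroup E] [NormedSpace ℝ E] {f : ℝ → E} {a x : ℝ}

lemma tendsto_setIntegral_Ioi_atTop (hf : IntegrableOn f (Ioi a)) :
    Tendsto (fun x => ∫ t in Ioi x, f t) atTop (𝓝 0) := by
  have h := (intervalIntegral_tendsto_integral_Ioi a hf tendsto_id).const_sub
    (∫ t in Ioi a, f t)
  rw [sub_self] at h
  refine h.congr' ?_
  filter_upwards [eventually_ge_atTop a] with x hx
  rw [id, ← intervalIntegral.integral_Ioi_sub_Ioi hf hx, sub_sub_cancel]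

lemma tendsto_setIntegral_Ioi_nhdsGT (hf : IntegrableOn f (Ioi a)) :
    Tendsto (fun x => ∫ t in Ioi x, f t) (𝓝[>] a) (𝓝 (∫ t in Ioi a, f t)) := by
  have hint : IntervalIntegrable f volume (min a a) (max a (a + 1)) := by
    rw [min_self, max_eq_right (by linarith), intervalIntegrable_iff_integrableOn_Ioc_of_le
      (by linarith)]
    exact hf.mono_set Ioc_subset_Ioi_self
  have hprim := (intervalIntegral.continuousWithinAt_primitive (measure_singleton a)
    hint).mono_of_mem_nhdsWithin (Icc_mem_nhdsGT (lt_add_one a))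
  have h := hprim.tendsto.const_sub (∫ t in Ioi a, f t)
  rw [intervalIntegral.integral_same, sub_zero] at h
  refine h.congr' ?_
  filter_upwards [self_mem_nhdsWithin] with x hx
  rw [← intervalIntegral.integral_Ioi_sub_Ioi hf (le_of_lt hx), sub_sub_cancel]

lemma hasDerivAt_setIntegral_Ioi [CompleteSpace E] (hf : IntegrableOn f (Ioi a))
    (hcont : ContinuousOn f (Ioi a)) (hx : a < x) :
    HasDerivAt (fun y => ∫ t in Ioi y, f t) (-f x) x := by
  have hint : IntervalIntegrable f volume a x :=
    (intervalIntegrable_iff_integrableOn_Ioc_of_le hx.le).2 (hf.mono_set Ioc_subset_Ioi_self)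
  have hFTC := (intervalIntegral.integral_hasDerivAt_right hint
    (hcont.stronglyMeasurableAtFilter isOpen_Ioi x hx)
    (hcont.continuousAt (isOpen_Ioi.mem_nhds hx))).const_sub (∫ t in Ioi a, f t)
  refine hFTC.congr_of_eventuallyEq ?_
  filter_upwards [Ioi_mem_nhds hx] with y hy
  rw [← intervalIntegral.integral_Ioi_sub_Ioi hf (le_of_lt hy), sub_sub_cancel]

end SetIntegralIoi

lemma integrableOn_exp_neg_mul_log : IntegrableOn (fun t => exp (-t) * log t) (Ioi 0) := by
  have hexp : Continuous fun t : ℝ => ((exp (-t) : ℝ) : ℂ) := by fun_prop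
  -- Mathlib differentiates the Mellin transform of `e^{-t}` under the integral sign, which
  -- includes the integrability of `log t • e^{-t}` at `s = 1`.
  have h := (mellin_hasDerivAt_of_isBigO_rpow (a := 2) (b := 0) (s := 1)
    (hexp.continuousOn.locallyIntegrableOn measurableSet_Ioi) ?_ (by norm_num) ?_ (by norm_num)).1
  · refine IntegrableOn.congr_fun (Integrable.re h) (fun t _ => ?_) measurableSet_Ioi
    simp [mul_comm, -Complex.ofReal_neg, Complex.exp_ofReal_re]
  · rw [← isBigO_norm_left]
    simp_rw [Complex.norm_real, isBigO_norm_left]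
    simpa only [neg_one_mul] using (isLittleO_exp_neg_mul_rpow_atTop zero_lt_one _).isBigO
  · simp_rw [neg_zero, rpow_zero]
    exact isBigO_const_of_tendsto ((hexp.tendsto 0).mono_left nhdsWithin_le_nhds) (by simp)

lemma integral_exp_neg_mul_log : ∫ t in Ioi 0, exp (-t) * log t = -γ := by
  have hGamma : HasDerivAt Complex.Gamma
      (∫ t : ℝ in Ioi 0, (t : ℂ) ^ ((1 : ℂ) - 1) * (log t * exp (-t))) 1 := by
    refine (Complex.hasDerivAt_GammaIntegral (by norm_num)).congr_of_eventuallyEq ?_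
    filter_upwards [(Complex.continuous_re.isOpen_preimage _ isOpen_Ioi).mem_nhds
      (by norm_num : (1 : ℂ) ∈ Complex.re ⁻¹' Ioi 0)] with s hs
    exact Complex.Gamma_eq_integral hs
  have hreal : (∫ t : ℝ in Ioi 0, (t : ℂ) ^ ((1 : ℂ) - 1) * (log t * exp (-t))) =
      ((∫ t in Ioi 0, exp (-t) * log t : ℝ) : ℂ) := by
    rw [← integral_complex_ofReal]
    refine setIntegral_congr_fun measurableSet_Ioi fun t _ => ?_
    simp [mul_comm]
  exact_mod_cast hreal ▸ hGamma.unique Complex.hasDerivAt_Gamma_one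

noncomputable def E₁ (x : ℝ) : ℝ := ∫ t in Ioi x, exp (-t) / t

lemma continuousOn_exp_neg_div : ContinuousOn (fun t => exp (-t) / t) (Ioi 0) :=
  fun t ht => by fun_prop (disch := exact ne_of_gt ht)

lemma integrableOn_exp_neg_div {x : ℝ} (hx : 0 < x) :
    IntegrableOn (fun t => exp (-t) / t) (Ioi x) := by
  refine integrable_of_isBigO_exp_neg one_pos
    (continuousOn_exp_neg_div.mono fun t ht => hx.trans_le ht) ?_
  have hinv : (fun t : ℝ => t⁻¹) =O[atTop] (fun _ => (1 : ℝ)) :=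
    tendsto_inv_atTop_zero.isBigO_one ℝ
  simpa [div_eq_mul_inv] using (isBigO_refl (fun t => exp (-t)) atTop).mul hinv

lemma hasDerivAt_E₁ {x : ℝ} (hx : 0 < x) : HasDerivAt E₁ (-(exp (-x) / x)) x :=
  hasDerivAt_setIntegral_Ioi (integrableOn_exp_neg_div (half_pos hx))
    (continuousOn_exp_neg_div.mono (Ioi_subset_Ioi (half_pos hx).le)) (half_lt_self hx)

lemma tendsto_E₁_atTop : Tendsto E₁ atTop (𝓝 0) :=
  tendsto_setIntegral_Ioi_atTop (integrableOn_exp_neg_div one_pos)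

lemma tendsto_exp_neg_mul_log_atTop : Tendsto (fun t => exp (-t) * log t) atTop (𝓝 0) := by
  have h : (fun t => exp (-t) * log t) =o[atTop] (fun t => exp (-t) * t) :=
    (isBigO_refl _ _).mul_isLittleO isLittleO_log_id_atTop
  exact h.trans_tendsto (by simpa [mul_comm] using tendsto_pow_mul_exp_neg_atTop_nhds_zero 1)

lemma E₁_eq_integral_exp_neg_mul_log_sub {x : ℝ} (hx : 0 < x) :
    E₁ x = (∫ t in Ioi x, exp (-t) * log t) - exp (-x) * log x := by
  have hlog := integrableOn_exp_neg_mul_log.mono_set (Ioi_subset_Ioi hx.le)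
  have hderiv : ∀ t ∈ Ioi x, HasDerivAt (fun t => -(exp (-t) * log t))
      (exp (-t) * log t - exp (-t) / t) t := fun t ht => by
    have h := ((hasDerivAt_neg t).exp.mul (hasDerivAt_log (hx.trans ht).ne')).neg
    exact h.congr_deriv (by ring)
  have hcont : ContinuousWithinAt (fun t => -(exp (-t) * log t)) (Ici x) x := by
    fun_prop (disch := exact hx.ne')
  have h := integral_Ioi_of_hasDerivAt_of_tendsto hcont hderiv
    (hlog.sub (integrableOn_exp_neg_div hx)) (by simpa using tendsto_exp_neg_mul_log_atTop.neg)
  rw [integral_sub hlog (integrableOn_exp_neg_div hx)] at h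
  rw [E₁]
  linarith

lemma tendsto_one_sub_exp_neg_mul_div (b : ℝ) :
    Tendsto (fun y => (1 - exp (-(b * y))) / y) (𝓝[≠] 0) (𝓝 b) := by
  have h : HasDerivAt (fun y => 1 - exp (-(b * y))) b 0 :=
    (((hasDerivAt_id 0).const_mul b).neg.exp.const_sub 1).congr_deriv (by simp)
  simpa [div_eq_inv_mul] using h.tendsto_slope_zero

lemma tendsto_E₁_add_log : Tendsto (fun x => E₁ x + log x) (𝓝[>] 0) (𝓝 (-γ)) := by
  have hint := tendsto_setIntegral_Ioi_nhdsGT integrableOn_exp_neg_mul_log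
  rw [integral_exp_neg_mul_log] at hint
  have hmul : Tendsto (fun x => (1 - exp (-(1 * x))) / x * (x * log x)) (𝓝[>] 0) (𝓝 (1 * 0)) :=
    ((tendsto_one_sub_exp_neg_mul_div 1).mono_left (nhdsGT_le_nhdsNE 0)).mul
      (by simpa using (continuous_mul_log.continuousWithinAt (s := Ioi 0) (x := 0)).tendsto)
  have hsum := hint.add hmul
  rw [mul_zero, add_zero] at hsum
  refine hsum.congr' ?_
  filter_upwards [self_mem_nhdsWithin] with x hx
  have hx0 : x ≠ 0 := ne_of_gt hx
  rw [E₁_eq_integral_exp_neg_mul_log_sub hx]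
  field_simp
  ring

lemma one_sub_exp_neg_pos {x : ℝ} (hx : 0 < x) : 0 < 1 - exp (-x) :=
  sub_pos.2 (exp_lt_one_iff.2 (neg_lt_zero.2 hx))

lemma hasDerivAt_log_one_sub_exp_neg_mul {b y : ℝ} (hb : 0 < b) (hy : 0 < y) :
    HasDerivAt (fun y => log (1 - exp (-(b * y)))) (b / (exp (b * y) - 1)) y := by
  have h := (((hasDerivAt_id y).const_mul b).neg.exp.const_sub 1).log
    (one_sub_exp_neg_pos (mul_pos hb hy)).ne'
  refine h.congr_deriv ?_
  simp only [Pi.neg_apply, id, mul_one, exp_neg]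
  field_simp

lemma tendsto_log_one_sub_exp_neg_mul_atTop {b : ℝ} (hb : 0 < b) :
    Tendsto (fun y => log (1 - exp (-(b * y)))) atTop (𝓝 0) := by
  have h : Tendsto (fun y => 1 - exp (-(b * y))) atTop (𝓝 1) := by
    simpa using (tendsto_exp_atBot.comp
      (tendsto_neg_atTop_atBot.comp (tendsto_id.const_mul_atTop hb))).const_sub 1
  simpa [Function.comp_def] using (continuousAt_log one_ne_zero).tendsto.comp h

noncomputable def expIntegralGap (b y : ℝ) : ℝ := E₁ y + log (1 - exp (-(b * y)))

variable {b x y : ℝ}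

lemma hasDerivAt_expIntegralGap (hb : 0 < b) (hy : 0 < y) :
    HasDerivAt (expIntegralGap b) (-(exp (-y) / y) + b / (exp (b * y) - 1)) y :=
  (hasDerivAt_E₁ hy).add (hasDerivAt_log_one_sub_exp_neg_mul hb hy)

lemma neg_exp_neg_div_add_div_exp_sub_one_nonneg_iff (hb : 0 < b) (hy : 0 < y) :
    0 ≤ -(exp (-y) / y) + b / (exp (b * y) - 1) ↔ 0 ≤ b * y * exp y - (exp (b * y) - 1) := by
  have hexp : 0 < exp (b * y) - 1 := sub_pos.2 (one_lt_exp_iff.2 (by positivity))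
  have hyexp : 0 < y * exp y := by positivity
  rw [neg_add_eq_sub, sub_nonneg, show exp (-y) / y = 1 / (y * exp y) by rw [exp_neg]; field_simp,
    div_le_div_iff₀ hyexp hexp, one_mul, sub_nonneg, mul_assoc]

lemma tendsto_expIntegralGap_atTop (hb : 0 < b) : Tendsto (expIntegralGap b) atTop (𝓝 0) := by
  have h := tendsto_E₁_atTop.add (tendsto_log_one_sub_exp_neg_mul_atTop hb)
  rwa [add_zero] at h

lemma tendsto_expIntegralGap_nhdsGT (hb : 0 < b) :
    Tendsto (expIntegralGap b) (𝓝[>] 0) (𝓝 (-γ + log b)) := by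
  have hslope := (continuousAt_log hb.ne').tendsto.comp
    ((tendsto_one_sub_exp_neg_mul_div b).mono_left (nhdsGT_le_nhdsNE 0))
  refine (tendsto_E₁_add_log.add hslope).congr' ?_
  filter_upwards [self_mem_nhdsWithin] with y (hy : 0 < y)
  rw [Function.comp_apply, log_div (one_sub_exp_neg_pos (mul_pos hb hy)).ne' hy.ne',
    expIntegralGap]
  ring

lemma expIntegralGap_exp_eulerMascheroniConstant_nonneg (hx : 0 < x) :
    0 ≤ expIntegralGap (exp γ) x := by
  have hb : 0 < exp γ := exp_pos γ
  refine SingleCrossingOn.nonneg_of_deriv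
    ((singleCrossingOn_mul_mul_exp_sub_exp_mul hb).congr_nonneg fun y hy =>
      (neg_exp_neg_div_add_div_exp_sub_one_nonneg_iff hb hy).symm)
    (fun y hy => hasDerivAt_expIntegralGap hb hy) ?_ (tendsto_expIntegralGap_atTop hb) hx
  simpa using tendsto_expIntegralGap_nhdsGT hb

lemma expIntegralGap_one_nonpos (hx : 0 < x) : expIntegralGap 1 x ≤ 0 := by
  have hmono : MonotoneOn (expIntegralGap 1) (Ici x) := by
    refine monotoneOn_of_hasDerivWithinAt_nonneg (convex_Ici x) (f' := fun y =>
      -(exp (-y) / y) + 1 / (exp (1 * y) - 1))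
      (fun y hy =>
        (hasDerivAt_expIntegralGap one_pos (hx.trans_le hy)).continuousAt.continuousWithinAt)
      (fun y hy => ?_) (fun y hy => ?_)
    all_goals rw [interior_Ici] at hy
    · exact (hasDerivAt_expIntegralGap one_pos (hx.trans hy)).hasDerivWithinAt
    · rw [neg_exp_neg_div_add_div_exp_sub_one_nonneg_iff one_pos (hx.trans hy)]
      have h := mul_le_mul_of_nonneg_right (add_one_le_exp (-y)) (exp_pos y).le
      rw [← exp_add, neg_add_cancel, exp_zero] at h
      simp only [one_mul]
      nlinarith
  exact ge_of_tendsto (tendsto_expIntegralGap_atTop one_pos) <| by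
    filter_upwards [eventually_ge_atTop x] with y hy using hmono self_mem_Ici hy hy

/-- for every `x > 0`, the exponential integral `∫_x^∞ e^{-t}/t dt`
is sandwiched between `-log (1 - e^{-a x})` and `-log (1 - e^{-x})`,
where `a = e^γ` with `γ` the Euler–Mascheroni constant. -/
theorem exp_integral_log_bounds (x : ℝ) (hx : 0 < x) :
    -Real.log (1 - Real.exp (-(Real.exp Real.eulerMascheroniConstant * x))) ≤
        ∫ t in Set.Ioi x, Real.exp (-t) / t ∧
      (∫ t in Set.Ioi x, Real.exp (-t) / t) ≤ -Real.log (1 - Real.exp (-x)) := by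
  have hlower := expIntegralGap_exp_eulerMascheroniConstant_nonneg hx
  have hupper := expIntegralGap_one_nonpos hx
  rw [expIntegralGap, E₁] at hlower hupper
  rw [one_mul] at hupper
  constructor <;> linarith
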